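/- arXiv:2407.03325 — 6 statements merged into one kernel-verified Lean document; each statement's English description precedes it below -/
import Mathlib

section
/- (Céa's lemma.) Let V be a real Hilbert space, a : V × V → ℝ a bilinear form that is continuous with constant γ > 0 and coercive with constant α > 0, and f : V → ℝ a continuous linear functional. Let u ∈ V satisfy a(u, v) = f(v) for all v ∈ V, let W ⊆ V be a closed subspace, and let u_W ∈ W satisfy a(u_W, w) = f(w) for all w ∈ W. Then ‖u − u_W‖ ≤ (γ/α) ‖u − w‖ for every w ∈ W; in particular the Galerkin error is bounded by a constant times the best approximation error of u in W. -/
/-- Céa's lemma. -/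
theorem cea_lemma
    {V : Type*} [NormedAddCommGroup V] [InnerProductSpace ℝ V] [CompleteSpace V]
    (a : V →ₗ[ℝ] V →ₗ[ℝ] ℝ) (γ α : ℝ) (hγ : 0 < γ) (hα : 0 < α)
    (hcont : ∀ u v : V, |a u v| ≤ γ * ‖u‖ * ‖v‖)
    (hcoer : ∀ v : V, α * ‖v‖ ^ 2 ≤ a v v)
    (f : V →L[ℝ] ℝ)
    (u : V) (hu : ∀ v : V, a u v = f v)
    (W : Submodule ℝ V) (hW : IsClosed (W : Set V))
    (uW : V) (huW : uW ∈ W) (huWsol : ∀ w ∈ W, a uW w = f w) :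
    ∀ w ∈ W, ‖u - uW‖ ≤ (γ / α) * ‖u - w‖ := by
  intro w hw
  set e := u - uW with he
  -- Galerkin orthogonality
  have horth : ∀ v ∈ W, a e v = 0 := by
    intro v hv
    have : a e v = a u v - a uW v := by simp [he, map_sub]
    rw [this, hu v, huWsol v hv]
    ring
  have hwW : w - uW ∈ W := W.sub_mem hw huW
  have key : a e e = a e (u - w) := by
    have h1 : e = (u - w) + (w - uW) := by rw [he]; abel
    have h2 : a e e = a e (u - w) + a e (w - uW) := by
      rw [← map_add]; exact congrArg _ h1
    rw [h2, horth _ hwW, add_zero]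
  have hcoe : α * ‖e‖ ^ 2 ≤ γ * ‖e‖ * ‖u - w‖ := by
    calc α * ‖e‖ ^ 2 ≤ a e e := hcoer e
      _ = a e (u - w) := key
      _ ≤ |a e (u - w)| := le_abs_self _
      _ ≤ γ * ‖e‖ * ‖u - w‖ := hcont e (u - w)
  rcases eq_or_ne ‖e‖ 0 with h0 | h0
  · rw [h0]
    positivity
  · have hep : 0 < ‖e‖ := lt_of_le_of_ne (norm_nonneg _) (Ne.symm h0)
    rw [div_mul_eq_mul_div, le_div_iff₀ hα]
    nlinarith [hcoe]
end

section
/- (A posteriori energy-norm error bound.) Let V be a real Hilbert space, a : V × V → ℝ a symmetric bilinear form that is continuous with constant γ > 0 and coercive with constant α > 0, and f : V → ℝ a continuous linear functional. Let V_rb ⊆ V_δ ⊆ V with V_δ a closed subspace and V_rb a closed subspace of V_δ, let u_δ ∈ V_δ satisfy a(u_δ, v) = f(v) for all v ∈ V_δ, and let u_rb ∈ V_rb satisfy a(u_rb, v) = f(v) for all v ∈ V_rb. Let r̂ ∈ V_δ be the Riesz representative of the residual, i.e. (r̂, v)_V = f(v) − a(u_rb, v) for all v ∈ V_δ, and let 0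 < α_LB ≤ α be a lower bound for the coercivity constant. Then ‖u_δ − u_rb‖_a ≤ ‖r̂‖ / √α_LB. -/
open scoped RealInnerProductSpace

/-- A posteriori energy-norm error bound. -/
theorem a_posteriori_energy_bound
    {V : Type*} [NormedAddCommGroup V] [InnerProductSpace ℝ V] [CompleteSpace V]
    (a : V →ₗ[ℝ] V →ₗ[ℝ] ℝ) (γ α : ℝ) (hγ : 0 < γ) (hα : 0 < α)
    (hsymm : ∀ u v : V, a u v = a v u)
    (hcont : ∀ u v : V, |a u v| ≤ γ * ‖u‖ * ‖v‖)
    (hcoer : ∀ v : V, α * ‖v‖ ^ 2 ≤ a v v)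
    (f : V →L[ℝ] ℝ)
    (Vδ Vrb : Submodule ℝ V) (hsub : Vrb ≤ Vδ)
    (hVδ : IsClosed (Vδ : Set V)) (hVrb : IsClosed (Vrb : Set V))
    (uδ : V) (huδ : uδ ∈ Vδ) (huδsol : ∀ v ∈ Vδ, a uδ v = f v)
    (urb : V) (hurb : urb ∈ Vrb) (hurbsol : ∀ v ∈ Vrb, a urb v = f v)
    (rhat : V) (hrhat : rhat ∈ Vδ)
    (hriesz : ∀ v ∈ Vδ, ⟪rhat, v⟫ = f v - a urb v)
    (αLB : ℝ) (hαLB : 0 < αLB) (hαLBle : αLB ≤ α) :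
    Real.sqrt (a (uδ - urb) (uδ - urb)) ≤ ‖rhat‖ / Real.sqrt αLB := by
  set e : V := uδ - urb with he_def
  have he : e ∈ Vδ := Vδ.sub_mem huδ (hsub hurb)
  have hA : a e e = ⟪rhat, e⟫ := by
    have h1 : a uδ e = f e := huδsol e he
    have h2 : a e e = f e - a urb e := by
      have : a e e = a uδ e - a urb e := by
        simp only [he_def, map_sub, LinearMap.sub_apply]
        linarith [hsymm urb uδ]
      rw [this, h1]
    rw [h2, hriesz e he]
  have hAle : a e e ≤ ‖rhat‖ * ‖e‖ := by
    rw [hA]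
    exact (real_inner_le_norm rhat e)
  have hcoe : αLB * ‖e‖ ^ 2 ≤ a e e := by
    calc αLB * ‖e‖ ^ 2 ≤ α * ‖e‖ ^ 2 := by nlinarith [sq_nonneg ‖e‖]
    _ ≤ a e e := hcoer e
  have hAnn : 0 ≤ a e e := le_trans (by positivity) hcoe
  have key : αLB * a e e ≤ ‖rhat‖ ^ 2 := by
    rcases eq_or_lt_of_le (norm_nonneg e) with h0 | h0
    · have hz : a e e = 0 := le_antisymm (by rw [← h0, mul_zero] at hAle; exact hAle) hAnn
      rw [hz]; nlinarith [sq_nonneg ‖rhat‖]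
    · have h3 : αLB * ‖e‖ ≤ ‖rhat‖ := by
        have := hcoe.trans hAle
        nlinarith
      nlinarith [norm_nonneg rhat]
  have hs : Real.sqrt (a e e) ≤ Real.sqrt (‖rhat‖ ^ 2 / αLB) := by
    apply Real.sqrt_le_sqrt
    rw [le_div_iff₀ hαLB]
    linarith [key]
  calc Real.sqrt (a e e) ≤ Real.sqrt (‖rhat‖ ^ 2 / αLB) := hs
  _ = ‖rhat‖ / Real.sqrt αLB := by
      rw [Real.sqrt_div (by positivity), Real.sqrt_sq (norm_nonneg _)]
end

section
/- Let V be a real Hilbert space, a : V × V → ℝ a symmetric bilinear form that is continuous with constant γ > 0 and coercive with constant α > 0, and f : V → ℝ a continuous linear functional. Let V_rb ⊆ V_δ ⊆ V with V_δ a closed subspace and V_rb a closed subspace of V_δ, let u_δ ∈ V_δ satisfy a(u_δ, v) = f(v) for all v ∈ V_δ, and let u_rb ∈ V_rb satisfy a(u_rb, v) = f(v) for all v ∈ V_rb. Let r̂ ∈ V_δ be the Riesz representative of the residual, i.e. (r̂, v)_V = f(v) − a(u_rb, v) for all v ∈ V_δ. Then the norm of the Riesz representative is controlled by the energy-norm error: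 ‖r̂‖ ≤ √γ ‖u_δ − u_rb‖_a. -/
open scoped RealInnerProductSpace

/-- The norm of the Riesz representative of the residual is controlled by the
energy-norm error. -/
theorem riesz_residual_norm_le_energy_error
    {V : Type*} [NormedAddCommGroup V] [InnerProductSpace ℝ V] [CompleteSpace V]
    (a : V →ₗ[ℝ] V →ₗ[ℝ] ℝ) (γ α : ℝ) (hγ : 0 < γ) (hα : 0 < α)
    (hsymm : ∀ u v : V, a u v = a v u)
    (hcont : ∀ u v : V, |a u v| ≤ γ * ‖u‖ * ‖v‖)
    (hcoer : ∀ v : V, α * ‖v‖ ^ 2 ≤ a v v)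
    (f : V →L[ℝ] ℝ)
    (Vδ Vrb : Submodule ℝ V) (hsub : Vrb ≤ Vδ)
    (hVδ : IsClosed (Vδ : Set V)) (hVrb : IsClosed (Vrb : Set V))
    (uδ : V) (huδ : uδ ∈ Vδ) (huδsol : ∀ v ∈ Vδ, a uδ v = f v)
    (urb : V) (hurb : urb ∈ Vrb) (hurbsol : ∀ v ∈ Vrb, a urb v = f v)
    (rhat : V) (hrhat : rhat ∈ Vδ)
    (hriesz : ∀ v ∈ Vδ, ⟪rhat, v⟫ = f v - a urb v) :
    ‖rhat‖ ≤ Real.sqrt γ * Real.sqrt (a (uδ - urb) (uδ - urb)) := by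
  set e := uδ - urb with he_def
  have hnn : ∀ v : V, 0 ≤ a v v := fun v => le_trans (by positivity) (hcoer v)
  -- Cauchy–Schwarz for a
  have cs : ∀ u v : V, (a u v) ^ 2 ≤ a u u * a v v := by
    intro u v
    have h := discrim_le_zero (a := a v v) (b := 2 * a u v) (c := a u u) ?_
    · unfold discrim at h; nlinarith [h]
    · intro t
      have h1 := hnn (u + t • v)
      have expand : a (u + t • v) (u + t • v)
          = a v v * t ^ 2 + 2 * a u v * t + a u u := by
        simp only [map_add, map_smul, LinearMap.add_apply, LinearMap.smul_apply,
          smul_eq_mul, hsymm v u]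
        ring
      linarith [expand ▸ h1]
  have he : e ∈ Vδ := Vδ.sub_mem huδ (hsub hurb)
  have h1 : ‖rhat‖ ^ 2 = a e rhat := by
    rw [← real_inner_self_eq_norm_sq, hriesz rhat hrhat, ← huδsol rhat hrhat,
      he_def, map_sub, LinearMap.sub_apply]
  have harr : a rhat rhat ≤ γ * ‖rhat‖ ^ 2 := by
    have := (abs_le.mp (hcont rhat rhat)).2
    nlinarith [this]
  have hsr : Real.sqrt (a rhat rhat) ≤ Real.sqrt γ * ‖rhat‖ := by
    calc Real.sqrt (a rhat rhat) ≤ Real.sqrt (γ * ‖rhat‖ ^ 2) := Real.sqrt_le_sqrt harr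
      _ = Real.sqrt γ * ‖rhat‖ := by
          rw [Real.sqrt_mul hγ.le, Real.sqrt_sq (norm_nonneg _)]
  have hkey : ‖rhat‖ ^ 2 ≤ Real.sqrt (a e e) * (Real.sqrt γ * ‖rhat‖) := by
    calc ‖rhat‖ ^ 2 = a e rhat := h1
      _ ≤ |a e rhat| := le_abs_self _
      _ = Real.sqrt ((a e rhat) ^ 2) := by rw [Real.sqrt_sq_eq_abs]
      _ ≤ Real.sqrt (a e e * a rhat rhat) := Real.sqrt_le_sqrt (cs e rhat)
      _ = Real.sqrt (a e e) * Real.sqrt (a rhat rhat) := Real.sqrt_mul (hnn e) _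
      _ ≤ Real.sqrt (a e e) * (Real.sqrt γ * ‖rhat‖) :=
          mul_le_mul_of_nonneg_left hsr (Real.sqrt_nonneg _)
  rcases eq_or_lt_of_le (norm_nonneg rhat) with h0 | h0
  · rw [← h0]; positivity
  · have := (mul_le_mul_iff_of_pos_right h0).mp (by nlinarith [hkey] : ‖rhat‖ * ‖rhat‖ ≤ (Real.sqrt γ * Real.sqrt (a e e)) * ‖rhat‖)
    exact this
end

section
/- (Effectivity bound for the energy-norm error estimator.) Let V be a real Hilbert space, a : V × V → ℝ a symmetric bilinear form that is continuous with constant γ > 0 and coercive with constant α > 0, and f : V → ℝ a continuous linear functional. Let V_rb ⊆ V_δ ⊆ V with V_δ a closed subspace and V_rb a closed subspace of V_δ, let u_δ ∈ V_δ satisfy a(u_δ, v) = f(v) for all v ∈ V_δ, and let u_rb ∈ V_rb satisfy a(u_rb, v) = f(v) for all v ∈ V_rb, with u_δ ≠ u_rb. Let r̂ ∈ V_δ be the Riesz representative of the residual, i.e. (r̂, v)_V = f(v) − a(u_rb, v) for all v ∈ V_δ, let 0 < α_LB ≤ α, and define the error estimator η_en = ‖r̂‖ / √α_LB and the effectivity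 index eff_en = η_en / ‖u_δ − u_rb‖_a. Then 1 ≤ eff_en ≤ √(γ / α_LB). -/
open scoped RealInnerProductSpace

lemma bilin_cs {V : Type*} [AddCommGroup V] [Module ℝ V]
    (a : V →ₗ[ℝ] V →ₗ[ℝ] ℝ) (hsymm : ∀ u v : V, a u v = a v u)
    (hnn : ∀ v : V, 0 ≤ a v v) (u v : V) :
    (a u v) ^ 2 ≤ a u u * a v v := by
  have h : ∀ x : ℝ, 0 ≤ a v v * (x * x) + (2 * a u v) * x + a u u := by
    intro x
    have h := hnn (u + x • v)
    simp only [map_add, map_smul, LinearMap.add_apply, LinearMap.smul_apply,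
      smul_eq_mul, hsymm v u] at h
    nlinarith [h]
  have := discrim_le_zero h
  rw [discrim] at this
  nlinarith [this]

/-- Effectivity bound for the energy-norm error estimator. -/
theorem effectivity_bound
    {V : Type*} [NormedAddCommGroup V] [InnerProductSpace ℝ V] [CompleteSpace V]
    (a : V →ₗ[ℝ] V →ₗ[ℝ] ℝ) (γ α : ℝ) (hγ : 0 < γ) (hα : 0 < α)
    (hsymm : ∀ u v : V, a u v = a v u)
    (hcont : ∀ u v : V, |a u v| ≤ γ * ‖u‖ * ‖v‖)
    (hcoer : ∀ v : V, α * ‖v‖ ^ 2 ≤ a v v)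
    (f : V →L[ℝ] ℝ)
    (Vδ Vrb : Submodule ℝ V) (hsub : Vrb ≤ Vδ)
    (hVδ : IsClosed (Vδ : Set V)) (hVrb : IsClosed (Vrb : Set V))
    (uδ : V) (huδ : uδ ∈ Vδ) (huδsol : ∀ v ∈ Vδ, a uδ v = f v)
    (urb : V) (hurb : urb ∈ Vrb) (hurbsol : ∀ v ∈ Vrb, a urb v = f v)
    (hne : uδ ≠ urb)
    (rhat : V) (hrhat : rhat ∈ Vδ)
    (hriesz : ∀ v ∈ Vδ, ⟪rhat, v⟫ = f v - a urb v)
    (αLB : ℝ) (hαLB : 0 < αLB) (hαLBle : αLB ≤ α)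
    (ηen effen : ℝ)
    (hη : ηen = ‖rhat‖ / Real.sqrt αLB)
    (heff : effen = ηen / Real.sqrt (a (uδ - urb) (uδ - urb))) :
    1 ≤ effen ∧ effen ≤ Real.sqrt (γ / αLB) := by
  set e := uδ - urb with hedef
  have he : e ∈ Vδ := Vδ.sub_mem huδ (hsub hurb)
  have hnn : ∀ v : V, 0 ≤ a v v := fun v =>
    le_trans (by positivity) (hcoer v)
  -- key identity
  have key : ∀ v ∈ Vδ, ⟪rhat, v⟫ = a e v := by
    intro v hv
    rw [hriesz v hv, ← huδsol v hv, hedef, map_sub, LinearMap.sub_apply]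
  have hene : e ≠ 0 := sub_ne_zero.mpr hne
  have henorm : 0 < ‖e‖ := norm_pos_iff.mpr hene
  have haee : 0 < a e e := lt_of_lt_of_le (by positivity) (hcoer e)
  -- a e e = ⟪rhat, e⟫ ≤ ‖rhat‖ * ‖e‖
  have h1 : a e e ≤ ‖rhat‖ * ‖e‖ := by
    rw [← key e he]; exact real_inner_le_norm rhat e
  -- αLB * ‖e‖² ≤ a e e
  have h2 : αLB * ‖e‖ ^ 2 ≤ a e e :=
    le_trans (by nlinarith [sq_nonneg ‖e‖]) (hcoer e)
  -- lower: αLB * a e e ≤ ‖rhat‖²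
  have hlow : αLB * a e e ≤ ‖rhat‖ ^ 2 := by
    nlinarith [sq_nonneg (‖rhat‖ * ‖e‖ - a e e), norm_nonneg rhat]
  -- ‖rhat‖² = a e rhat
  have hr2 : ‖rhat‖ ^ 2 = a e rhat := by
    rw [← key rhat hrhat, real_inner_self_eq_norm_sq]
  -- CS + continuity ⇒ ‖rhat‖² ≤ γ * a e e
  have hcs := bilin_cs a hsymm hnn e rhat
  have hcg : a rhat rhat ≤ γ * ‖rhat‖ ^ 2 := by
    have := (abs_le.mp (hcont rhat rhat)).2
    nlinarith [this]
  have hup : ‖rhat‖ ^ 2 ≤ γ * a e e := by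
    rcases eq_or_lt_of_le (norm_nonneg rhat) with h0 | h0
    · rw [← h0]; nlinarith [haee]
    · have hq : (‖rhat‖ ^ 2) ^ 2 ≤ a e e * (γ * ‖rhat‖ ^ 2) := by
        calc (‖rhat‖ ^ 2) ^ 2 = (a e rhat) ^ 2 := by rw [hr2]
          _ ≤ a e e * a rhat rhat := hcs
          _ ≤ a e e * (γ * ‖rhat‖ ^ 2) := by
              exact mul_le_mul_of_nonneg_left hcg (le_of_lt haee)
      have h4 : ‖rhat‖ ^ 2 * ‖rhat‖ ^ 2 ≤ (γ * a e e) * ‖rhat‖ ^ 2 := by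
        nlinarith [hq]
      exact le_of_mul_le_mul_right h4 (by positivity)
  -- now the conclusions
  have hsaee : (0:ℝ) < Real.sqrt (a e e) := Real.sqrt_pos.mpr haee
  have hsalb : (0:ℝ) < Real.sqrt αLB := Real.sqrt_pos.mpr hαLB
  have heffval : effen = ‖rhat‖ / (Real.sqrt αLB * Real.sqrt (a e e)) := by
    rw [heff, hη, div_div]
  constructor
  · rw [heffval]
    rw [le_div_iff₀ (by positivity), one_mul,
      ← Real.sqrt_mul (le_of_lt hαLB)]
    calc Real.sqrt (αLB * a e e) ≤ Real.sqrt (‖rhat‖ ^ 2) :=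
          Real.sqrt_le_sqrt hlow
      _ = ‖rhat‖ := Real.sqrt_sq (norm_nonneg rhat)
  · rw [heffval, div_le_iff₀ (by positivity)]
    have hrle : ‖rhat‖ ≤ Real.sqrt (γ * a e e) := by
      rw [← Real.sqrt_sq (norm_nonneg rhat)]
      exact Real.sqrt_le_sqrt hup
    calc ‖rhat‖ ≤ Real.sqrt (γ * a e e) := hrle
      _ = Real.sqrt (γ / αLB) * (Real.sqrt αLB * Real.sqrt (a e e)) := by
          rw [← Real.sqrt_mul (by positivity), ← Real.sqrt_mul (by positivity)]
          congr 1
          field_simp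
end

section
/- (Output error bound.) Let V be a real Hilbert space, a : V × V → ℝ a symmetric bilinear form that is continuous with constant γ > 0 and coercive with constant α > 0, and f : V → ℝ a continuous linear functional. Let V_rb ⊆ V_δ ⊆ V with V_δ a closed subspace and V_rb a closed subspace of V_δ, let u_δ ∈ V_δ satisfy a(u_δ, v) = f(v) for all v ∈ V_δ, and let u_rb ∈ V_rb satisfy a(u_rb, v) = f(v) for all v ∈ V_rb. Let r̂ ∈ V_δ be the Riesz representative of the residual, i.e. (r̂, v)_V = f(v) − a(u_rb, v) for all v ∈ V_δ, and let 0 < α_LB ≤ α. Then the output error satisfies 0 ≤ f(u_δ) − f(u_rb) ≤ ‖r̂‖² / α_LB, i.e. the compliant output error is bounded by the square of the energy-norm error estimator η_en = ‖r̂‖ / √α_LB. -/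
open scoped RealInnerProductSpace

/-- Output error bound in the compliant case. -/
theorem compliant_output_error_bound
    {V : Type*} [NormedAddCommGroup V] [InnerProductSpace ℝ V] [CompleteSpace V]
    (a : V →ₗ[ℝ] V →ₗ[ℝ] ℝ) (γ α : ℝ) (hγ : 0 < γ) (hα : 0 < α)
    (hsymm : ∀ u v : V, a u v = a v u)
    (hcont : ∀ u v : V, |a u v| ≤ γ * ‖u‖ * ‖v‖)
    (hcoer : ∀ v : V, α * ‖v‖ ^ 2 ≤ a v v)
    (f : V →L[ℝ] ℝ)
    (Vδ Vrb : Submodule ℝ V) (hsub : Vrb ≤ Vδ)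
    (hVδ : IsClosed (Vδ : Set V)) (hVrb : IsClosed (Vrb : Set V))
    (uδ : V) (huδ : uδ ∈ Vδ) (huδsol : ∀ v ∈ Vδ, a uδ v = f v)
    (urb : V) (hurb : urb ∈ Vrb) (hurbsol : ∀ v ∈ Vrb, a urb v = f v)
    (rhat : V) (hrhat : rhat ∈ Vδ)
    (hriesz : ∀ v ∈ Vδ, ⟪rhat, v⟫ = f v - a urb v)
    (αLB : ℝ) (hαLB : 0 < αLB) (hαLBle : αLB ≤ α) :
    0 ≤ f uδ - f urb ∧ f uδ - f urb ≤ ‖rhat‖ ^ 2 / αLB := by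

  set e := uδ - urb with he
  have heδ : e ∈ Vδ := Vδ.sub_mem huδ (hsub hurb)
  have hfe : f uδ - f urb = f e := by simp [he]
  -- a(urb, e) = 0 (Galerkin orthogonality via symmetry)
  have horth : a urb e = 0 := by
    have h1 : a e urb = a uδ urb - a urb urb := by simp [he, map_sub]
    have h2 : a uδ urb = f urb := huδsol urb (hsub hurb)
    have h3 : a urb urb = f urb := hurbsol urb hurb
    rw [hsymm, h1, h2, h3, sub_self]
  have haee : a e e = f e - a urb e := by
    have : a e e = a uδ e - a urb e := by
      simp only [he, map_sub, LinearMap.sub_apply]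
      linarith [hsymm uδ urb]
    rw [this, huδsol e heδ]
  have hfe2 : f e = a e e := by rw [haee, horth]; ring
  have hip : a e e = ⟪rhat, e⟫ := by rw [hriesz e heδ, haee]
  have hcoe : α * ‖e‖ ^ 2 ≤ a e e := hcoer e
  have hcs : ⟪rhat, e⟫ ≤ ‖rhat‖ * ‖e‖ := real_inner_le_norm rhat e
  constructor
  · rw [hfe, hfe2]
    have := sq_nonneg ‖e‖
    nlinarith
  · rw [hfe, hfe2]
    have h1 : a e e ≤ ‖rhat‖ * ‖e‖ := by rw [hip]; exact hcs
    have hS0 : 0 ≤ a e e := le_trans (by positivity) hcoe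
    rw [le_div_iff₀ hαLB]
    nlinarith [sq_nonneg (α * ‖e‖ - ‖rhat‖), mul_le_mul_of_nonneg_left h1 hα.le, mul_le_mul_of_nonneg_left hcoe hα.le, mul_le_mul_of_nonneg_right hαLBle hS0]
end

section
/- (POD optimality.) Let V be a real inner product space and ψ₁, …, ψ_M ∈ V. Let C ∈ ℝ^{M×M} be the correlation matrix C_{m,q} = (1/M)(ψ_m, ψ_q)_V with eigenvalues λ₁ ≥ λ₂ ≥ … ≥ λ_M counted with multiplicity. Then for every subspace W ⊆ V with dim W ≤ N, the mean-square projection error satisfies (1/M) Σ_{m=1}^{M} inf_{w ∈ W} ‖ψ_m − w‖² ≥ Σ_{i=N+1}^{M} λ_i; i.e. no N-dimensional subspace achieves a smaller mean-square snapshot error than the sum of the neglected correlation-matrix eigenvalues, which is attained by the POD space. -/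
open scoped RealInnerProductSpace


lemma pod_aux_sum_bound (M N : ℕ) (lam s : Fin M → ℝ)
    (hlam : ∀ i, 0 ≤ lam i) (hsort : ∀ i j : Fin M, i ≤ j → lam j ≤ lam i)
    (hs0 : ∀ i, 0 ≤ s i) (hs1 : ∀ i, s i ≤ 1) (hsN : ∑ i, s i ≤ (N : ℝ)) :
    ∑ i, lam i * s i ≤ ∑ i ∈ Finset.univ.filter (fun i : Fin M => (i:ℕ) < N), lam i := by
  rcases le_or_gt M N with hMN | hNM
  · have hfil : Finset.univ.filter (fun i : Fin M => (i:ℕ) < N) = Finset.univ := by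
      ext i; simp [lt_of_lt_of_le i.isLt hMN]
    rw [hfil]
    refine Finset.sum_le_sum fun i _ => ?_
    calc lam i * s i ≤ lam i * 1 := by
          exact mul_le_mul_of_nonneg_left (hs1 i) (hlam i)
      _ = lam i := mul_one _
  · set ν : Fin M := ⟨N, hNM⟩
    have hcard : (Finset.univ.filter fun i : Fin M => (i:ℕ) < N).card = N := by
      have : (Finset.univ.filter fun i : Fin M => (i:ℕ) < N) = Finset.Iio ν := by
        ext i; simp [Fin.lt_def, ν]
      rw [this, Fin.card_Iio]
    have hsplit := Finset.sum_filter_add_sum_filter_not Finset.univ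
      (fun i : Fin M => (i:ℕ) < N) (fun i => lam i * s i)
    have hsplit2 := Finset.sum_filter_add_sum_filter_not Finset.univ
      (fun i : Fin M => (i:ℕ) < N) s
    have h1 : ∑ i ∈ Finset.univ.filter (fun i : Fin M => (i:ℕ) < N), lam i * s i ≤
        ∑ i ∈ Finset.univ.filter (fun i : Fin M => (i:ℕ) < N), (lam i + lam ν * (s i - 1)) := by
      refine Finset.sum_le_sum fun i _ => ?_
      have hle : lam ν ≤ lam i := by
        rcases Finset.mem_filter.mp ‹i ∈ _› with ⟨_, hi⟩
        exact hsort i ν (Fin.le_def.mpr (le_of_lt hi))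
      nlinarith [hs1 i, hs0 i, hlam i, hlam ν]
    have h2 : ∑ i ∈ Finset.univ.filter (fun i : Fin M => ¬ (i:ℕ) < N), lam i * s i ≤
        ∑ i ∈ Finset.univ.filter (fun i : Fin M => ¬ (i:ℕ) < N), lam ν * s i := by
      refine Finset.sum_le_sum fun i hi => ?_
      have hle : lam i ≤ lam ν := by
        refine hsort ν i ?_
        rcases Finset.mem_filter.mp hi with ⟨_, hi⟩
        exact Fin.le_def.mpr (le_of_not_gt hi)
      exact mul_le_mul_of_nonneg_right hle (hs0 i)
    have hfin : ∑ i ∈ Finset.univ.filter (fun i : Fin M => (i:ℕ) < N), (lam i + lam ν * (s i - 1))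
        + ∑ i ∈ Finset.univ.filter (fun i : Fin M => ¬ (i:ℕ) < N), lam ν * s i
        ≤ ∑ i ∈ Finset.univ.filter (fun i : Fin M => (i:ℕ) < N), lam i := by
      rw [Finset.sum_add_distrib, ← Finset.mul_sum, ← Finset.mul_sum]
      have : ∑ i ∈ Finset.univ.filter (fun i : Fin M => (i:ℕ) < N), (s i - 1)
          + ∑ i ∈ Finset.univ.filter (fun i : Fin M => ¬ (i:ℕ) < N), s i ≤ 0 := by
        rw [Finset.sum_sub_distrib, Finset.sum_const, hcard]
        have := hsplit2
        simp only [nsmul_eq_mul, mul_one] at *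
        linarith
      nlinarith [hlam ν]
    linarith
open Finset

set_option maxHeartbeats 1600000 in
/-- POD optimality: no subspace of dimension at most `N` achieves a smaller
mean-square snapshot projection error than the sum of the neglected
correlation-matrix eigenvalues. -/
theorem pod_optimality
    {V : Type*} [NormedAddCommGroup V] [InnerProductSpace ℝ V]
    (M : ℕ) (ψ : Fin M → V)
    (C : Matrix (Fin M) (Fin M) ℝ)
    (hC : ∀ m q : Fin M, C m q = (1 / (M : ℝ)) * ⟪ψ m, ψ q⟫)
    (v : Fin M → Fin M → ℝ) (lam : Fin M → ℝ)
    (horth : ∀ i j : Fin M, ∑ m, v i m * v j m = if i = j then 1 else 0)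
    (heig : ∀ i : Fin M, C.mulVec (v i) = lam i • v i)
    (hsort : ∀ i j : Fin M, i ≤ j → lam j ≤ lam i)
    (N : ℕ) :
    ∀ W : Submodule ℝ V, FiniteDimensional ℝ W → Module.finrank ℝ W ≤ N →
      ∑ i ∈ Finset.univ.filter (fun i : Fin M => N ≤ (i : ℕ)), lam i ≤
        (1 / (M : ℝ)) * ∑ m, sInf ((fun w : V => ‖ψ m - w‖ ^ 2) '' (W : Set V)) := by
  intro W hFD hdim
  classical
  rcases Nat.eq_zero_or_pos M with hM0 | hMpos
  · subst hM0; simp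
  have hM : (0:ℝ) < M := by exact_mod_cast hMpos
  haveI : CompleteSpace W := FiniteDimensional.complete ℝ W
  set n := Module.finrank ℝ W with hn
  set b := stdOrthonormalBasis ℝ W with hb
  set w : Fin n → V := fun k => (b k : V) with hwdef
  have hw : Orthonormal ℝ w := by
    rw [orthonormal_iff_ite]
    intro i j
    have := orthonormal_iff_ite.mp b.orthonormal i j
    rw [← Submodule.coe_inner] at *
    exact this
  set P : V → V := fun x => (W.orthogonalProjectionOnto x : V) with hP
  -- projection lower-bounds the infimum
  have hproj : ∀ m : Fin M, ‖ψ m - P (ψ m)‖ ^ 2 ≤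
      sInf ((fun w : V => ‖ψ m - w‖ ^ 2) '' (W : Set V)) := by
    intro m
    refine le_csInf ⟨‖ψ m - 0‖ ^ 2, ⟨0, W.zero_mem, rfl⟩⟩ ?_
    rintro _ ⟨x, hx, rfl⟩
    have hmem : P (ψ m) - x ∈ W := W.sub_mem (W.orthogonalProjectionOnto (ψ m)).2 hx
    have h0 : ⟪ψ m - P (ψ m), P (ψ m) - x⟫ = 0 :=
      Submodule.starProjection_inner_eq_zero (ψ m) _ hmem
    have hsum : ψ m - x = (ψ m - P (ψ m)) + (P (ψ m) - x) := by abel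
    show ‖ψ m - P (ψ m)‖ ^ 2 ≤ ‖ψ m - x‖ ^ 2
    rw [hsum, norm_add_sq_real, h0]
    nlinarith [norm_nonneg (P (ψ m) - x)]
  -- Parseval-type identity for the projection
  have hPnorm : ∀ x : V, ‖P x‖ ^ 2 = ∑ k, ⟪w k, x⟫ ^ 2 := by
    intro x
    have hzero : ∀ k, ⟪w k, P x⟫ = ⟪w k, x⟫ := by
      intro k
      have h0 : ⟪x - P x, w k⟫ = 0 := Submodule.starProjection_inner_eq_zero x (w k) (b k).2
      rw [real_inner_comm] at h0
      rw [inner_sub_right] at h0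
      linarith
    have hrepr : P x = ∑ k, ⟪w k, x⟫ • w k := by
      have h1 := b.orthogonalProjectionOnto_apply_eq_sum (U := W) x
      calc P x = ((W.orthogonalProjectionOnto x : W) : V) := rfl
        _ = ((∑ k, ⟪w k, x⟫ • b k : W) : V) := by rw [h1]
        _ = ∑ k, ⟪w k, x⟫ • w k := by push_cast; rfl
    rw [← real_inner_self_eq_norm_sq]
    nth_rw 1 [hrepr]
    rw [sum_inner]
    refine Finset.sum_congr rfl fun k _ => ?_
    rw [real_inner_smul_left, hzero k, sq]
  -- Pythagoras
  have hPyth : ∀ x : V, ‖x - P x‖ ^ 2 = ‖x‖ ^ 2 - ‖P x‖ ^ 2 := by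
    intro x
    have h0 : ⟪x - P x, P x⟫ = 0 :=
      Submodule.starProjection_inner_eq_zero x _ (W.orthogonalProjectionOnto x).2
    have hsum : (x - P x) + P x = x := by abel
    have h2 := norm_add_sq_real (x - P x) (P x)
    rw [h0, hsum] at h2
    linarith
  -- the z vectors
  set z : Fin M → V := fun i => ∑ q, v i q • ψ q with hz
  have hinner : ∀ m q : Fin M, ⟪ψ m, ψ q⟫ = M * C m q := by
    intro m q; rw [hC m q]; field_simp
  have hzz : ∀ i j : Fin M, ⟪z i, z j⟫ = if i = j then M * lam i else 0 := by
    intro i j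
    have hmv : ∀ q, ∑ r, v j r * ⟪ψ q, ψ r⟫ = M * (lam j * v j q) := by
      intro q
      have h1 : ∑ r, v j r * ⟪ψ q, ψ r⟫ = M * ∑ r, C q r * v j r := by
        rw [Finset.mul_sum]
        refine Finset.sum_congr rfl fun r _ => ?_
        rw [hinner q r]; ring
      have h2 : ∑ r, C q r * v j r = lam j * v j q := by
        have h3 := congrFun (heig j) q
        simpa [Matrix.mulVec, dotProduct] using h3
      rw [h1, h2]
    have hexp : ⟪z i, z j⟫ = ∑ q, v i q * (M * (lam j * v j q)) := by
      simp only [hz]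
      rw [sum_inner]
      refine Finset.sum_congr rfl fun q _ => ?_
      rw [real_inner_smul_left, inner_sum]
      rw [← hmv q]
      congr 1
      refine Finset.sum_congr rfl fun r _ => ?_
      rw [real_inner_smul_right]
    rw [hexp]
    have h4 : ∑ q, v i q * (M * (lam j * v j q)) = (M * lam j) * ∑ q, v i q * v j q := by
      rw [Finset.mul_sum]; exact Finset.sum_congr rfl fun q _ => by ring
    rw [h4, horth i j]
    by_cases h : i = j
    · subst h; simp
    · simp [h]
  have hlamnn : ∀ i, 0 ≤ lam i := by
    intro i
    have h := hzz i i
    rw [if_pos rfl] at h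
    have := real_inner_self_nonneg (x := z i)
    nlinarith [hM]
  -- column orthogonality
  have hcol : ∀ m q : Fin M, ∑ i, v i m * v i q = if m = q then 1 else 0 := by
    have hA : Matrix.of v * (Matrix.of v).transpose = 1 := by
      ext i j
      simp only [Matrix.mul_apply, Matrix.transpose_apply, Matrix.of_apply, Matrix.one_apply]
      exact horth i j
    have hA2 := mul_eq_one_comm.mp hA
    intro m q
    simpa [Matrix.mul_apply, Matrix.transpose_apply, Matrix.one_apply] using
      congrFun (congrFun hA2 m) q
  have hpsi : ∀ m : Fin M, ψ m = ∑ i, v i m • z i := by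
    intro m
    have h1 : ∑ i, v i m • z i = ∑ q, (∑ i, v i m * v i q) • ψ q := by
      simp only [hz, Finset.smul_sum]
      rw [Finset.sum_comm]
      refine Finset.sum_congr rfl fun q _ => ?_
      rw [Finset.sum_smul]
      exact Finset.sum_congr rfl fun i _ => by rw [smul_smul]
    rw [h1]
    simp only [hcol]
    simp [ite_smul]
  -- expansion of inner products
  have hpx : ∀ (m : Fin M) (x : V), ⟪ψ m, x⟫ = ∑ i, v i m * ⟪z i, x⟫ := by
    intro m x
    conv_lhs => rw [hpsi m]
    rw [sum_inner]
    exact Finset.sum_congr rfl fun i _ => real_inner_smul_left _ _ _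
  have hzpsi : ∀ (i : Fin M) (m : Fin M), ⟪z i, ψ m⟫ = v i m * (M * lam i) := by
    intro i m
    calc ⟪z i, ψ m⟫ = ∑ j, v j m * ⟪z i, z j⟫ := by
          conv_lhs => rw [hpsi m]
          rw [inner_sum]
          exact Finset.sum_congr rfl fun j _ => real_inner_smul_right _ _ _
      _ = v i m * (M * lam i) := by
          rw [Finset.sum_eq_single i]
          · rw [hzz, if_pos rfl]
          · intro j _ hj
            rw [hzz, if_neg (fun h => hj h.symm), mul_zero]
          · intro h; exact absurd (Finset.mem_univ i) h
  -- key identity B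
  have hB : ∀ x : V, ∑ m, ⟪ψ m, x⟫ ^ 2 = ∑ i, ⟪z i, x⟫ ^ 2 := by
    intro x
    calc ∑ m, ⟪ψ m, x⟫ ^ 2
        = ∑ m, ∑ i, ∑ j, (v i m * ⟪z i, x⟫) * (v j m * ⟪z j, x⟫) := by
          refine Finset.sum_congr rfl fun m _ => ?_
          rw [hpx m x, sq, Finset.sum_mul_sum]
      _ = ∑ i, ∑ j, (⟪z i, x⟫ * ⟪z j, x⟫) * ∑ m, v i m * v j m := by
          rw [Finset.sum_comm]
          refine Finset.sum_congr rfl fun i _ => ?_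
          rw [Finset.sum_comm]
          refine Finset.sum_congr rfl fun j _ => ?_
          rw [Finset.mul_sum]
          exact Finset.sum_congr rfl fun m _ => by ring
      _ = ∑ i, ⟪z i, x⟫ ^ 2 := by
          refine Finset.sum_congr rfl fun i _ => ?_
          rw [Finset.sum_eq_single i]
          · rw [horth, if_pos rfl]; ring
          · intro j _ hj
            rw [horth, if_neg (fun h => hj h.symm), mul_zero]
          · intro h; exact absurd (Finset.mem_univ i) h
  -- trace identity
  have htrace : ∑ m, ‖ψ m‖ ^ 2 = M * ∑ i, lam i := by
    have h1 : ∀ m, ‖ψ m‖ ^ 2 = ∑ i, v i m * (v i m * (M * lam i)) := by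
      intro m
      rw [← real_inner_self_eq_norm_sq, hpx m (ψ m)]
      exact Finset.sum_congr rfl fun i _ => by rw [hzpsi i m]
    rw [Finset.sum_congr rfl fun m _ => h1 m, Finset.sum_comm, Finset.mul_sum]
    refine Finset.sum_congr rfl fun i _ => ?_
    have h2 := horth i i
    rw [if_pos rfl] at h2
    calc ∑ m, v i m * (v i m * (M * lam i))
        = (∑ m, v i m * v i m) * (M * lam i) := by
          rw [Finset.sum_mul]
          exact Finset.sum_congr rfl fun m _ => by ring
      _ = M * lam i := by rw [h2, one_mul]
  -- Bessel per i : t i ≤ M lam i, and normalized sums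
  set t : Fin M → ℝ := fun i => ∑ k, ⟪z i, w k⟫ ^ 2 with ht
  have htle : ∀ i, t i ≤ M * lam i := by
    intro i
    have hb2 := hw.sum_inner_products_le (z i) (s := Finset.univ)
    simp only [Real.norm_eq_abs, sq_abs] at hb2
    have : ‖z i‖ ^ 2 = M * lam i := by
      have h := hzz i i
      rw [if_pos rfl] at h
      rw [← real_inner_self_eq_norm_sq, h]
    rw [this] at hb2
    calc t i = ∑ x, ⟪w x, z i⟫ ^ 2 :=
          Finset.sum_congr rfl fun k _ => by rw [real_inner_comm]
      _ ≤ _ := hb2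
  set u : Fin M → V := fun i => (Real.sqrt (M * lam i))⁻¹ • z i with hu
  set s : Fin M → ℝ := fun i => ∑ k, ⟪u i, w k⟫ ^ 2 with hs
  have hz0 : ∀ i, lam i = 0 → z i = 0 := by
    intro i h0
    have h := hzz i i
    rw [if_pos rfl, h0, mul_zero] at h
    exact inner_self_eq_zero.mp h
  have hts : ∀ i, t i = (M * lam i) * s i := by
    intro i
    rcases (hlamnn i).eq_or_lt with h0 | hpos
    · have hzi := hz0 i h0.symm
      simp only [ht, hs, hu]
      simp [hzi, ← h0]
    · have hMl : (0:ℝ) < M * lam i := by positivity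
      have hzu : z i = Real.sqrt ((M:ℝ) * lam i) • u i := by
        simp only [hu]
        rw [smul_smul, mul_inv_cancel₀ (ne_of_gt (Real.sqrt_pos.mpr hMl)), one_smul]
      simp only [ht, hs]
      rw [Finset.mul_sum]
      refine Finset.sum_congr rfl fun k _ => ?_
      rw [hzu, real_inner_smul_left, mul_pow, Real.sq_sqrt hMl.le]
  have hs0 : ∀ i, 0 ≤ s i := fun i => Finset.sum_nonneg fun k _ => sq_nonneg _
  have hs1 : ∀ i, s i ≤ 1 := by
    intro i
    rcases (hlamnn i).eq_or_lt with h0 | hpos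
    · have : u i = 0 := by rw [hu]; simp [hz0 i h0.symm]
      simp [hs, this]
    · have hMl : 0 < M * lam i := by positivity
      have := hts i
      have h2 := htle i
      nlinarith
  have hsN : ∑ i, s i ≤ (N : ℝ) := by
    have huorth : Orthonormal ℝ (fun i : {i : Fin M // lam i ≠ 0} => u i.1) := by
      rw [orthonormal_iff_ite]
      intro i j
      have hMi : (0:ℝ) < M * lam i.1 :=
        mul_pos hM (lt_of_le_of_ne (hlamnn i.1) (Ne.symm i.2))
      have hMj : (0:ℝ) < M * lam j.1 :=
        mul_pos hM (lt_of_le_of_ne (hlamnn j.1) (Ne.symm j.2))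
      simp only [hu]
      rw [real_inner_smul_left, real_inner_smul_right, hzz]
      by_cases h : i = j
      · subst h
        rw [if_pos rfl, if_pos rfl]
        have hsq : Real.sqrt ((M:ℝ) * lam i.1) * Real.sqrt ((M:ℝ) * lam i.1)
            = (M:ℝ) * lam i.1 := Real.mul_self_sqrt hMi.le
        have hne : Real.sqrt ((M:ℝ) * lam i.1) ≠ 0 :=
          ne_of_gt (Real.sqrt_pos.mpr hMi)
        nth_rw 3 [← hsq]
        calc (Real.sqrt ((M:ℝ) * lam i.1))⁻¹ *
              ((Real.sqrt ((M:ℝ) * lam i.1))⁻¹ *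
                (Real.sqrt ((M:ℝ) * lam i.1) * Real.sqrt ((M:ℝ) * lam i.1)))
            = ((Real.sqrt ((M:ℝ) * lam i.1))⁻¹ * Real.sqrt ((M:ℝ) * lam i.1)) *
              ((Real.sqrt ((M:ℝ) * lam i.1))⁻¹ * Real.sqrt ((M:ℝ) * lam i.1)) := by ring
          _ = 1 := by rw [inv_mul_cancel₀ hne]; ring
      · rw [if_neg (fun hv => h (Subtype.ext hv)), if_neg h]
        simp
    have hperk : ∀ k, ∑ i, ⟪u i, w k⟫ ^ 2 ≤ 1 := by
      intro k
      have hbes := huorth.sum_inner_products_le (w k) (s := Finset.univ)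
      simp only [Real.norm_eq_abs, sq_abs] at hbes
      have hwk : ‖w k‖ = 1 := hw.1 k
      rw [hwk, one_pow] at hbes
      have hfil : ∑ i, ⟪u i, w k⟫ ^ 2
          = ∑ i ∈ Finset.univ.filter (fun i : Fin M => lam i ≠ 0), ⟪u i, w k⟫ ^ 2 := by
        refine (Finset.sum_filter_of_ne fun i _ hne => ?_).symm
        intro h0
        have hui : u i = 0 := by
          simp only [hu]
          rw [hz0 i h0]
          simp
        rw [hui] at hne
        simp at hne
      have hsub : ∑ i ∈ Finset.univ.filter (fun i : Fin M => lam i ≠ 0), ⟪u i, w k⟫ ^ 2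
          = ∑ i : {i : Fin M // lam i ≠ 0}, ⟪u i.1, w k⟫ ^ 2 := by
        rw [← Finset.sum_subtype (Finset.univ.filter (fun i : Fin M => lam i ≠ 0))
          (fun i => by simp) (fun i => ⟪u i, w k⟫ ^ 2)]
      rw [hfil, hsub]
      exact hbes
    calc ∑ i, s i = ∑ k, ∑ i, ⟪u i, w k⟫ ^ 2 := by
          simp only [hs]
          exact Finset.sum_comm
      _ ≤ ∑ k : Fin n, (1:ℝ) := Finset.sum_le_sum fun k _ => hperk k
      _ = (n : ℝ) := by simp
      _ ≤ (N : ℝ) := by exact_mod_cast hdim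
  -- combine
  have hcore : ∑ i ∈ Finset.univ.filter (fun i : Fin M => N ≤ (i : ℕ)), lam i ≤
      (1 / (M : ℝ)) * ∑ m, ‖ψ m - P (ψ m)‖ ^ 2 := by
    have hexp : ∑ m, ‖ψ m - P (ψ m)‖ ^ 2 = M * ∑ i, lam i - ∑ i, t i := by
      have : ∑ m, ‖ψ m - P (ψ m)‖ ^ 2 = ∑ m, ‖ψ m‖ ^ 2 - ∑ m, ‖P (ψ m)‖ ^ 2 := by
        rw [← Finset.sum_sub_distrib]
        exact Finset.sum_congr rfl fun m _ => hPyth (ψ m)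
      rw [this, htrace]
      congr 1
      calc ∑ m, ‖P (ψ m)‖ ^ 2 = ∑ m, ∑ k, ⟪w k, ψ m⟫ ^ 2 :=
            Finset.sum_congr rfl fun m _ => hPnorm (ψ m)
        _ = ∑ k, ∑ m, ⟪ψ m, w k⟫ ^ 2 := by
            rw [Finset.sum_comm]
            exact Finset.sum_congr rfl fun k _ => Finset.sum_congr rfl fun m _ => by
              rw [real_inner_comm]
        _ = ∑ k, ∑ i, ⟪z i, w k⟫ ^ 2 := Finset.sum_congr rfl fun k _ => hB (w k)
        _ = ∑ i, t i := Finset.sum_comm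
    rw [hexp]
    have hls : ∑ i, lam i * s i ≤
        ∑ i ∈ univ.filter (fun i : Fin M => (i:ℕ) < N), lam i :=
      pod_aux_sum_bound M N lam s hlamnn hsort hs0 hs1 hsN
    have hT : ∑ i, t i = M * ∑ i, lam i * s i := by
      rw [Finset.mul_sum]
      exact Finset.sum_congr rfl fun i _ => by rw [hts i]; ring
    have hsplit := Finset.sum_filter_add_sum_filter_not univ
      (fun i : Fin M => (i:ℕ) < N) lam
    have hnot : univ.filter (fun i : Fin M => ¬ (i:ℕ) < N) =
        univ.filter (fun i : Fin M => N ≤ (i:ℕ)) := by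
      ext i; simp [not_lt]
    rw [hnot] at hsplit
    rw [hT]
    rw [div_mul_eq_mul_div, one_mul, le_div_iff₀ hM]
    nlinarith [hls]
  calc ∑ i ∈ Finset.univ.filter (fun i : Fin M => N ≤ (i : ℕ)), lam i
      ≤ (1 / (M : ℝ)) * ∑ m, ‖ψ m - P (ψ m)‖ ^ 2 := hcore
    _ ≤ (1 / (M : ℝ)) * ∑ m, sInf ((fun w : V => ‖ψ m - w‖ ^ 2) '' (W : Set V)) := by
        have h1 : (0:ℝ) ≤ 1 / (M:ℝ) := by positivity
        exact mul_le_mul_of_nonneg_left (Finset.sum_le_sum fun m _ => hproj m) h1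
end
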